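/- For every x ∈ ℝ² ∖ L and every y ∈ ℝ², the symmetric partial sums Σ_{n=−N}^{N} ((x+(n,0))/|x+(n,0)|²) · y converge as N → ∞ to π · vec(cot(π · conj(⟵x))) · y. -/

import Mathlib

/-- Identify `ℂ` with `ℝ²` via `vec (a + b i) = (a, b)`. -/
def vec (z : ℂ) : ℝ × ℝ := (z.re, z.im)

/-- Identify `ℝ²` with `ℂ`: `⟵(x₁, x₂) = x₁ + i x₂`. -/
noncomputable def toC (x : ℝ × ℝ) : ℂ := x.1 + x.2 * Complex.I

/-- The Euclidean inner product on `ℝ²`. -/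
def dot (v w : ℝ × ℝ) : ℝ := v.1 * w.1 + v.2 * w.2

/-!
Pairing the terms `n` and `-n`, the symmetric partial sums of `∑ (w + n)⁻¹` are the logarithmic
derivatives of the Euler partial products for `sin (π w)`, hence converge to `π cot (π w)`.
For `w = conj ⟵x` one has `(w + n)⁻¹ = ⟵(x + (n, 0)) / |x + (n, 0)|²`, and the real-linear
functional `z ↦ vec z · y` turns this into the claimed limit.
-/

open Filter Finset Complex
open scoped Real Topology

lemma Finset.sum_Icc_neg_eq_add_sum_range {M : Type*} [AddCommGroup M] (f : ℤ → M) (N : ℕ) :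
    ∑ m ∈ Icc (-N : ℤ) N, f m = f 0 + ∑ j ∈ range N, (f (-(j + 1)) + f (j + 1)) := by
  induction N with
  | zero => simp
  | succ N ih =>
    rw [Nat.cast_succ, sum_Icc_succ_eq_add_endpoints, ih, sum_range_succ]
    abel

theorem tendsto_sum_Icc_inv_add_intCast {w : ℂ} (hw : w ∈ integerComplement) :
    Tendsto (fun N : ℕ => ∑ n ∈ Icc (-N : ℤ) N, (w + n)⁻¹) atTop (𝓝 (π * cot (π * w))) := by
  have hsum (N : ℕ) : ∑ n ∈ Icc (-N : ℤ) N, (w + n)⁻¹ = 1 / w + ∑ j ∈ range N, cotTerm w j := by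
    simp only [sum_Icc_neg_eq_add_sum_range, cotTerm]
    push_cast
    simp [sub_eq_add_neg]
  simp_rw [hsum]
  simpa using (tendsto_logDeriv_euler_cot_sub hw).const_add (1 / w)

lemma conj_toC_add_intCast (x : ℝ × ℝ) (n : ℤ) :
    starRingEnd ℂ (toC (x + ((n : ℝ), 0))) = starRingEnd ℂ (toC x) + n := by
  apply Complex.ext <;> simp [toC]

lemma conj_toC_mem_integerComplement {x : ℝ × ℝ} (hx : ∀ n : ℤ, x ≠ ((n : ℝ), 0)) :
    starRingEnd ℂ (toC x) ∈ integerComplement := by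
  rintro ⟨n, hn⟩
  apply hx n
  simpa [toC] using (congrArg (fun z => (z.re, -z.im)) hn).symm

lemma vec_inv_conj_toC (v : ℝ × ℝ) :
    vec (starRingEnd ℂ (toC v))⁻¹ = (v.1 ^ 2 + v.2 ^ 2)⁻¹ • v := by
  simp only [vec, toC, inv_re, inv_im, normSq_apply, map_add, map_mul, conj_ofReal, conj_I,
    add_re, add_im, mul_re, mul_im, ofReal_re, ofReal_im, neg_re, neg_im, I_re, I_im, Prod.ext_iff,
    Prod.smul_fst, Prod.smul_snd, smul_eq_mul]
  constructor <;> ring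

noncomputable def dotVecCLM (y : ℝ × ℝ) : ℂ →L[ℝ] ℝ :=
  y.1 • reCLM + y.2 • imCLM

lemma dotVecCLM_apply (y : ℝ × ℝ) (z : ℂ) : dotVecCLM y z = dot (vec z) y := by
  simp [dotVecCLM, dot, vec, mul_comm]

/-- For `x ∉ L = ℤ × {0}` and any `y`, the symmetric partial sums
`∑_{n=-N}^{N} ((x+(n,0))/|x+(n,0)|²) · y` converge to `π vec(cot(π conj(⟵x))) · y`. -/
theorem stmt6 (x : ℝ × ℝ) (hx : ∀ n : ℤ, x ≠ ((n : ℝ), 0)) (y : ℝ × ℝ) :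
    Filter.Tendsto
      (fun N : ℕ => ∑ n ∈ Finset.Icc (-(N : ℤ)) (N : ℤ),
        dot (((x + ((n : ℝ), 0)).1 ^ 2 + (x + ((n : ℝ), 0)).2 ^ 2)⁻¹ • (x + ((n : ℝ), 0))) y)
      Filter.atTop
      (nhds (Real.pi * dot (vec (Complex.cot (Real.pi * (starRingEnd ℂ) (toC x)))) y)) := by
  have h := ((dotVecCLM y).continuous.tendsto _).comp
    (tendsto_sum_Icc_inv_add_intCast (conj_toC_mem_integerComplement hx))
  convert h using 1
  · ext N
    simp [map_sum, dotVecCLM_apply, ← conj_toC_add_intCast, vec_inv_conj_toC]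
  · simp only [dot, vec, dotVecCLM_apply, mul_re, mul_im, ofReal_re, ofReal_im, zero_mul, sub_zero,
      add_zero, nhds_eq_nhds_iff]
    ring
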